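/- arXiv:2306.09694 — 6 statements merged into one kernel-verified Lean document; each statement's English description precedes it below -/
import Mathlib

section
/- Let 0 < μ ≤ L, let f ∈ S¹_{μ,L}(ℝ^d), let g : ℝ^d → ℝ be convex and continuous, set Φ = f + g with unique minimizer x⋆, and let 0 < s < 1/L. Then for every y ∈ ℝ^d, the s-proximal subgradient satisfies ‖G_s(y)‖² ≥ 2μ ( Φ(y − sG_s(y)) − Φ(x⋆) ). -/
/-!
Write `p = y - s • G` and `Φ = f + g`. Strong convexity of `f` at `y`, the descent bound for `f`
between `y` and `p`, and the first-order optimality condition of the proximal step (at a minimizer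
of a smooth function plus a convex one, the derivative of the smooth part in the direction of any
`x` dominates the drop of the convex part from the minimizer to `x`) add up to
`Φ p - Φ x ≤ ⟪G, y - x⟫ - μ / 2 * ‖x - y‖ ^ 2 - s * (1 - L * s) * ‖G‖ ^ 2` for every `x`.
As `L * s < 1` the last term is nonpositive, and `r ↦ ‖G‖ * r - μ / 2 * r ^ 2` is at most
`‖G‖ ^ 2 / (2 * μ)`.
-/

open Set AffineMap
open scoped RealInnerProductSpace

section NormedSpace

variable {E : Type*} [NormedAddCommGroup E] [NormedSpace ℝ E]

theorem ConvexOn.add_fderiv_sub_le {φ : E → ℝ} {φ' : E →L[ℝ] ℝ} {s : Set E} {x y : E}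
    (hφ : ConvexOn ℝ s φ) (hx : x ∈ s) (hy : y ∈ s) (hd : HasFDerivAt φ φ' y) :
    φ y + φ' (x - y) ≤ φ x := by
  have hline : ConvexOn ℝ (Icc 0 1) (φ ∘ lineMap (k := ℝ) y x) :=
    (hφ.comp_affineMap (lineMap y x)).subset (fun t ht => hφ.1.lineMap_mem hy hx ht)
      (convex_Icc 0 1)
  have hderiv : HasDerivAt (φ ∘ lineMap (k := ℝ) y x) (φ' (x - y)) 0 :=
    hd.comp_hasDerivAt_of_eq 0 hasDerivAt_lineMap (lineMap_apply_zero y x).symm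
  have hslope := hline.le_slope_of_hasDerivAt (left_mem_Icc.2 zero_le_one)
    (right_mem_Icc.2 zero_le_one) zero_lt_one hderiv
  simp only [slope_def_field, Function.comp_apply, lineMap_apply_one, lineMap_apply_zero,
    sub_zero, div_one] at hslope
  exact le_sub_iff_add_le'.1 hslope

theorem IsMinOn.le_fderiv_sub_add_of_convexOn {q h : E → ℝ} {q' : E →L[ℝ] ℝ} {s : Set E}
    {p x : E} (hmin : IsMinOn (fun w => q w + h w) s p) (hq : HasFDerivAt q q' p)
    (hh : ConvexOn ℝ s h) (hp : p ∈ s) (hx : x ∈ s) :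
    h p ≤ q' (x - p) + h x := by
  -- On the segment from `p` to `x`, replacing `h` by its chord gives a differentiable majorant
  -- of the objective that still takes its minimal value at `p`.
  set F : ℝ → ℝ := fun t => q (lineMap p x t) + t * (h x - h p)
  have hFmin : IsMinOn F (Icc 0 1) 0 := by
    intro t ht
    have hchord : h (lineMap p x t) ≤ (1 - t) * h p + t * h x := by
      simpa [lineMap_apply_module] using
        hh.2 hp hx (sub_nonneg.2 ht.2) ht.1 (sub_add_cancel 1 t)
    have hle : q p + h p ≤ q (lineMap p x t) + h (lineMap p x t) :=
      hmin (hh.1.lineMap_mem hp hx ht)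
    show F 0 ≤ F t
    simp only [F, lineMap_apply_zero, zero_mul, add_zero]
    linarith
  have hFderiv : HasDerivAt F (q' (x - p) + (h x - h p)) 0 :=
    (hq.comp_hasDerivAt_of_eq 0 hasDerivAt_lineMap (lineMap_apply_zero p x).symm).add
      ((hasDerivAt_id (0 : ℝ)).mul_const (h x - h p)) |>.congr_deriv (by simp)
  have hcone : (1 : ℝ) ∈ posTangentConeAt (Icc 0 1) 0 :=
    mem_posTangentConeAt_of_segment_subset (by simp [segment_eq_Icc])
  have hnonneg :=
    hFmin.localize.hasFDerivWithinAt_nonneg hFderiv.hasFDerivAt.hasFDerivWithinAt hcone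
  simp only [ContinuousLinearMap.toSpanSingleton_apply, smul_eq_mul, one_mul] at hnonneg
  linarith

-- The mean value inequality gives the constant `L` rather than the sharp `L / 2`.
theorem le_add_fderiv_sub_add_mul_norm_sq {f : E → ℝ} {f' : E → E →L[ℝ] ℝ} {L : ℝ}
    (hL : 0 ≤ L) (hf : ∀ z, HasFDerivAt f (f' z) z) (hlip : ∀ z w, ‖f' z - f' w‖ ≤ L * ‖z - w‖)
    (x y : E) : f x ≤ f y + f' y (x - y) + L * ‖x - y‖ ^ 2 := by
  have hbound : ∀ z ∈ segment ℝ y x, ‖f' z - f' y‖ ≤ L * ‖x - y‖ := fun z hz => by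
    have hzy : ‖z - y‖ ≤ ‖x - y‖ := by
      have := dist_add_dist_of_mem_segment hz
      rw [← dist_eq_norm, ← dist_eq_norm, dist_comm z y, dist_comm x y]
      linarith [dist_nonneg (x := z) (y := x)]
    exact (hlip z y).trans (mul_le_mul_of_nonneg_left hzy hL)
  have hmvt := (convex_segment y x).norm_image_sub_le_of_norm_hasFDerivWithin_le'
    (fun z _ => (hf z).hasFDerivWithinAt) hbound (left_mem_segment ℝ y x)
    (right_mem_segment ℝ y x)
  have := (le_abs_self _).trans hmvt
  nlinarith

end NormedSpace

section InnerProductSpace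

variable {E : Type*} [NormedAddCommGroup E] [InnerProductSpace ℝ E]

theorem StrongConvexOn.add_fderiv_sub_add_le {f : E → ℝ} {f' : E →L[ℝ] ℝ} {s : Set E} {μ : ℝ}
    {x y : E} (hf : StrongConvexOn s μ f) (hx : x ∈ s) (hy : y ∈ s) (hd : HasFDerivAt f f' y) :
    f y + f' (x - y) + μ / 2 * ‖x - y‖ ^ 2 ≤ f x := by
  have := (strongConvexOn_iff_convex.1 hf).add_fderiv_sub_le hx hy
    (hd.sub ((hasStrictFDerivAt_norm_sq y).hasFDerivAt.const_mul (μ / 2)))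
  simp only [sub_apply, smul_apply, innerSL_apply_apply, smul_eq_mul, nsmul_eq_mul,
    inner_sub_right, real_inner_self_eq_norm_sq, Nat.cast_ofNat] at this
  rw [norm_sub_sq_real, real_inner_comm]
  linarith

theorem IsMinOn.add_inner_le_of_prox {g : E → ℝ} {s : ℝ} {v p : E}
    (hmin : IsMinOn (fun w => 1 / (2 * s) * ‖w - v‖ ^ 2 + g w) univ p) (hg : ConvexOn ℝ univ g)
    (x : E) : g p + s⁻¹ * ⟪v - p, x - p⟫ ≤ g x := by
  have := hmin.le_fderiv_sub_add_of_convexOn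
    (((hasStrictFDerivAt_norm_sq _).hasFDerivAt.comp p ((hasFDerivAt_id p).sub_const v)).const_mul
      (1 / (2 * s))) hg (mem_univ p) (mem_univ x)
  simp only [one_div, mul_inv_rev, id_eq, ContinuousLinearMap.comp_id, smul_apply,
    coe_innerSL_apply, nsmul_eq_mul, Nat.cast_ofNat, smul_eq_mul] at this
  rw [← neg_sub p v, inner_neg_left]
  linarith

theorem proximal_gradient_gap_le [CompleteSpace E] {f g : E → ℝ} {f' : E → E} {μ L s : ℝ}
    (hs : s ≠ 0) (hL : 0 ≤ L) (hf : ∀ z, HasGradientAt f (f' z) z)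
    (hlip : ∀ z w, ‖f' z - f' w‖ ≤ L * ‖z - w‖) (hsc : StrongConvexOn univ μ f)
    (hg : ConvexOn ℝ univ g) {y G : E}
    (hmin : IsMinOn (fun w => 1 / (2 * s) * ‖w - (y - s • f' y)‖ ^ 2 + g w) univ (y - s • G))
    (x : E) :
    f (y - s • G) + g (y - s • G) - (f x + g x)
      ≤ ⟪G, y - x⟫ - μ / 2 * ‖x - y‖ ^ 2 - s * (1 - L * s) * ‖G‖ ^ 2 := by
  have hf' : ∀ z, HasFDerivAt f (InnerProductSpace.toDual ℝ E (f' z)) z :=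
    fun z => (hf z).hasFDerivAt
  have hstrong : f y + ⟪f' y, x - y⟫ + μ / 2 * ‖x - y‖ ^ 2 ≤ f x := by
    simpa only [InnerProductSpace.toDual_apply_apply] using
      hsc.add_fderiv_sub_add_le (mem_univ x) (mem_univ y) (hf' y)
  have hdescent : f (y - s • G) ≤ f y - s * ⟪f' y, G⟫ + L * s ^ 2 * ‖G‖ ^ 2 := by
    have := le_add_fderiv_sub_add_mul_norm_sq hL hf' (fun z w => by
      rw [← map_sub, LinearIsometryEquiv.norm_map]; exact hlip z w) (y - s • G) y
    simp only [sub_sub_cancel_left, InnerProductSpace.toDual_apply_apply, inner_neg_right,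
      inner_smul_right, norm_neg, norm_smul, Real.norm_eq_abs, mul_pow, sq_abs] at this
    linarith
  have hprox :
      g (y - s • G) + ⟪G, x - y⟫ + s * ‖G‖ ^ 2 - ⟪f' y, x - y⟫ - s * ⟪f' y, G⟫ ≤ g x := by
    have := hmin.add_inner_le_of_prox hg x
    rw [show y - s • f' y - (y - s • G) = s • (G - f' y) by module,
      show x - (y - s • G) = (x - y) + s • G by module, inner_smul_left] at this
    simp only [Real.ringHom_apply, inner_add_right, inner_sub_left, inner_smul_right,
      real_inner_self_eq_norm_sq, ne_eq, hs, not_false_eq_true, inv_mul_cancel_left₀] at this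
    linarith
  rw [← neg_sub x y, inner_neg_right]
  nlinarith

end InnerProductSpace

theorem proximal_subgradient_strongly_convex_inequality_general {d : ℕ} (μ L s : ℝ)
    (hμ : 0 < μ) (hs : 0 < s) (hsL : s < 1 / L)
    (f : EuclideanSpace ℝ (Fin d) → ℝ)
    (f' : EuclideanSpace ℝ (Fin d) → EuclideanSpace ℝ (Fin d))
    (hdiff : ∀ z, HasGradientAt f (f' z) z)
    (hlip : ∀ z w, ‖f' z - f' w‖ ≤ L * ‖z - w‖)
    (hsc : ConvexOn ℝ Set.univ (fun z => f z - μ / 2 * ‖z‖ ^ 2))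
    (g : EuclideanSpace ℝ (Fin d) → ℝ)
    (hgconv : ConvexOn ℝ Set.univ g)
    (P G : EuclideanSpace ℝ (Fin d) → EuclideanSpace ℝ (Fin d))
    (hP : ∀ z, IsMinOn (fun w => 1 / (2 * s) * ‖w - (z - s • f' z)‖ ^ 2 + g w) Set.univ (P z))
    (hG : ∀ z, G z = s⁻¹ • (z - P z))
    (xstar : EuclideanSpace ℝ (Fin d))
    :
    ∀ y : EuclideanSpace ℝ (Fin d),
      ‖G y‖ ^ 2 ≥ 2 * μ * ((f (y - s • G y) + g (y - s • G y)) - (f xstar + g xstar)) := by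
  intro y
  have hL : 0 < L := one_div_pos.mp (hs.trans hsL)
  have hLs : s * L < 1 := (lt_div_iff₀ hL).1 hsL
  have hPG : P y = y - s • G y := by rw [hG, smul_inv_smul₀ hs.ne', sub_sub_cancel]
  have hgap := proximal_gradient_gap_le hs.ne' hL.le hdiff hlip (strongConvexOn_iff_convex.2 hsc)
    hgconv (hPG ▸ hP y) xstar
  have hcauchy : ⟪G y, y - xstar⟫ ≤ ‖G y‖ * ‖xstar - y‖ :=
    (real_inner_le_norm _ _).trans_eq (by rw [norm_sub_rev])
  have hstep : 0 ≤ s * (1 - L * s) * ‖G y‖ ^ 2 := by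
    have : 0 ≤ 1 - L * s := by linarith
    positivity
  nlinarith [sq_nonneg (‖G y‖ - μ * ‖xstar - y‖)]

theorem proximal_subgradient_strongly_convex_inequality {d : ℕ} (μ L s : ℝ)
    (hμ : 0 < μ) (hμL : μ ≤ L) (hs : 0 < s) (hsL : s < 1 / L)
    (f : EuclideanSpace ℝ (Fin d) → ℝ)
    (f' : EuclideanSpace ℝ (Fin d) → EuclideanSpace ℝ (Fin d))
    (hdiff : ∀ z, HasGradientAt f (f' z) z)
    (hlip : ∀ z w, ‖f' z - f' w‖ ≤ L * ‖z - w‖)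
    (hsc : ConvexOn ℝ Set.univ (fun z => f z - μ / 2 * ‖z‖ ^ 2))
    (g : EuclideanSpace ℝ (Fin d) → ℝ)
    (hgconv : ConvexOn ℝ Set.univ g) (hgcont : Continuous g)
    (P G : EuclideanSpace ℝ (Fin d) → EuclideanSpace ℝ (Fin d))
    (hP : ∀ z, IsMinOn (fun w => 1 / (2 * s) * ‖w - (z - s • f' z)‖ ^ 2 + g w) Set.univ (P z))
    (hG : ∀ z, G z = s⁻¹ • (z - P z))
    (xstar : EuclideanSpace ℝ (Fin d))
    (hmin : ∀ z, f xstar + g xstar ≤ f z + g z)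
    (huniq : ∀ z, (∀ w, f z + g z ≤ f w + g w) → z = xstar)
    :
    ∀ y : EuclideanSpace ℝ (Fin d),
      ‖G y‖ ^ 2 ≥ 2 * μ * ((f (y - s • G y) + g (y - s • G y)) - (f xstar + g xstar)) :=
  proximal_subgradient_strongly_convex_inequality_general μ L s hμ hs hsL f f' hdiff hlip hsc g
    hgconv P G hP hG xstar
end

section
/- Let 0 < μ ≤ L, let f ∈ S²_{μ,L}(ℝ^d) with unique minimizer x⋆, let 0 < s < 1/L, and let X : (0,∞) → ℝ^d be a twice differentiable solution of the gradient-correction high-resolution ODE. Set T = 4/(μ√s). Then for all t ≥ T, f(X(t)) − f(x⋆) ≤ ( E(T) / (2t(t+√s)) ) · exp( −(μ√s/4)(t − T) ), where E is the continuous Lyapunov function. -/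
open scoped RealInnerProductSpace

/-- The continuous Lyapunov function
`E(t) = 2t(t+√s)(F(X t) - F(x⋆)) + (t²/2)‖Ẋ(t)‖²
        + (1/2)‖tẊ(t) + 2(X(t) - x⋆) + t√s∇F(X t)‖²`. -/
noncomputable def contLyap {d : ℕ} (s : ℝ) (F : EuclideanSpace ℝ (Fin d) → ℝ)
    (F' : EuclideanSpace ℝ (Fin d) → EuclideanSpace ℝ (Fin d))
    (X V : ℝ → EuclideanSpace ℝ (Fin d)) (xstar : EuclideanSpace ℝ (Fin d)) (t : ℝ) : ℝ :=
  2 * t * (t + Real.sqrt s) * (F (X t) - F xstar) + t ^ 2 / 2 * ‖V t‖ ^ 2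
    + 1 / 2 * ‖t • V t + (2 : ℝ) • (X t - xstar) + (t * Real.sqrt s) • F' (X t)‖ ^ 2

/-!
Along a solution, the ODE gives the mixed term `tẊ + 2(X - x⋆) + t√s∇f(X)` of `E` the derivative
`-(t + √s/2)∇f(X)`, and the cross terms `⟪Ẋ, ∇f(X)⟫` in `E'` cancel. Strong convexity bounds every
remaining term: `∇f` is `μ`-strongly monotone, the first-order inequality at `x⋆` controls
`⟪X - x⋆, ∇f(X)⟫`, and the Polyak–Łojasiewicz inequality `2μ(f - f(x⋆)) ≤ ‖∇f‖²` absorbs the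
positive gap term. For `t ≥ T = 4/(μ√s)` and `μs < 1` this yields `E' ≤ -(μ√s/4)E`, so Grönwall
makes `E` decay exponentially from `T`, and `2t(t + √s)(f(X) - f(x⋆)) ≤ E`.
-/

open Set Real

theorem ConvexOn.add_apply_sub_le_of_hasFDerivAt {F : Type*} [NormedAddCommGroup F]
    [NormedSpace ℝ F] {h : F → ℝ} {h' : F →L[ℝ] ℝ} {x : F} (hconv : ConvexOn ℝ univ h)
    (hd : HasFDerivAt h h' x) (y : F) : h x + h' (y - x) ≤ h y := by
  have hline : ConvexOn ℝ univ (h ∘ (AffineMap.lineMap x y : ℝ → F)) := by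
    simpa using hconv.comp_affineMap (AffineMap.lineMap x y : ℝ →ᵃ[ℝ] F)
  have hd0 : HasDerivAt (h ∘ (AffineMap.lineMap x y : ℝ → F)) (h' (y - x)) 0 := by
    refine HasFDerivAt.comp_hasDerivAt (0 : ℝ) ?_ AffineMap.hasDerivAt_lineMap
    simpa using hd
  have := hline.le_slope_of_hasDerivAt (mem_univ 0) (mem_univ 1) zero_lt_one hd0
  simp only [slope_def_field, Function.comp_apply, AffineMap.lineMap_apply_zero,
    AffineMap.lineMap_apply_one, sub_zero, div_one] at this
  linarith

section StrongConvexity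

variable {E : Type*} [NormedAddCommGroup E] [InnerProductSpace ℝ E] [CompleteSpace E]
  {f : E → ℝ} {f' : E → E} {μ : ℝ}

theorem ConvexOn.add_inner_add_sq_le_of_sub_half_sq
    (hsc : ConvexOn ℝ univ (fun z => f z - μ / 2 * ‖z‖ ^ 2)) {x : E}
    (hf : HasGradientAt f (f' x) x) (y : E) :
    f x + ⟪f' x, y - x⟫ + μ / 2 * ‖y - x‖ ^ 2 ≤ f y := by
  have hd := hf.hasFDerivAt.sub ((hasStrictFDerivAt_norm_sq x).hasFDerivAt.const_mul (μ / 2))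
  have := hsc.add_apply_sub_le_of_hasFDerivAt hd y
  have hsq := norm_add_sq_real x (y - x)
  rw [add_sub_cancel] at hsq
  simp only [sub_apply, InnerProductSpace.toDual_apply_apply,
    smul_apply, coe_innerSL_apply, nsmul_eq_mul, Nat.cast_ofNat,
    smul_eq_mul, hsq] at this
  linarith

theorem ConvexOn.mul_norm_sub_sq_le_inner_gradient_sub
    (hsc : ConvexOn ℝ univ (fun z => f z - μ / 2 * ‖z‖ ^ 2))
    (hf : ∀ z, HasGradientAt f (f' z) z) (x y : E) :
    μ * ‖y - x‖ ^ 2 ≤ ⟪f' y - f' x, y - x⟫ := by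
  have hxy := hsc.add_inner_add_sq_le_of_sub_half_sq (hf x) y
  have hyx := hsc.add_inner_add_sq_le_of_sub_half_sq (hf y) x
  rw [norm_sub_rev, ← neg_sub y x, inner_neg_right] at hyx
  rw [inner_sub_left]
  linarith

theorem ConvexOn.two_mul_sub_le_norm_gradient_sq
    (hsc : ConvexOn ℝ univ (fun z => f z - μ / 2 * ‖z‖ ^ 2)) (hμ : 0 ≤ μ) {x : E}
    (hf : HasGradientAt f (f' x) x) (y : E) :
    2 * μ * (f x - f y) ≤ ‖f' x‖ ^ 2 := by
  have h := hsc.add_inner_add_sq_le_of_sub_half_sq hf y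
  have hsq := norm_add_sq_real (f' x) (μ • (y - x))
  rw [inner_smul_right, norm_smul, Real.norm_of_nonneg hμ] at hsq
  nlinarith [sq_nonneg ‖f' x + μ • (y - x)‖]

end StrongConvexity

theorem HasDerivAt.mul_norm_sq_le_inner_of_strongly_monotone {E : Type*}
    [NormedAddCommGroup E] [InnerProductSpace ℝ E] {g : E → E} {μ : ℝ}
    (hg : ∀ x y, μ * ‖y - x‖ ^ 2 ≤ ⟪g y - g x, y - x⟫) {X : ℝ → E} {v G : E} {t : ℝ}
    (hX : HasDerivAt X v t) (hgX : HasDerivAt (fun τ => g (X τ)) G t) :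
    μ * ‖v‖ ^ 2 ≤ ⟪G, v⟫ := by
  have hXs := hasDerivAt_iff_tendsto_slope.mp hX
  refine le_of_tendsto_of_tendsto ((hXs.norm.pow 2).const_mul μ)
    ((hasDerivAt_iff_tendsto_slope.mp hgX).inner hXs) ?_
  filter_upwards with τ
  simp only [slope_def_module, real_inner_smul_left, real_inner_smul_right, norm_smul,
    mul_pow, Real.norm_eq_abs, sq_abs]
  nlinarith [mul_le_mul_of_nonneg_left (hg (X t) (X τ)) (sq_nonneg (τ - t)⁻¹)]

theorem norm_add₃_sq_le {E : Type*} [SeminormedAddCommGroup E] (a b c : E) :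
    ‖a + b + c‖ ^ 2 ≤ 3 * (‖a‖ ^ 2 + ‖b‖ ^ 2 + ‖c‖ ^ 2) := by
  have := norm_add₃_le (a := a) (b := b) (c := c)
  nlinarith [norm_nonneg (a + b + c), sq_nonneg (‖a‖ - ‖b‖), sq_nonneg (‖b‖ - ‖c‖),
    sq_nonneg (‖a‖ - ‖c‖)]

theorem le_mul_exp_of_hasDerivAt_le_neg_mul {E D : ℝ → ℝ} {k a b : ℝ} (hab : a ≤ b)
    (hE : ∀ t ∈ Icc a b, HasDerivAt E (D t) t) (hD : ∀ t ∈ Ico a b, D t ≤ -k * E t) :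
    E b ≤ E a * exp (-k * (b - a)) := by
  have := le_gronwallBound_of_liminf_deriv_right_le (δ := E a) (K := -k) (ε := 0)
    (fun t ht => (hE t ht).continuousAt.continuousWithinAt)
    (fun t ht _ hr => (hE t (Ico_subset_Icc_self ht)).hasDerivWithinAt.liminf_right_slope_le hr)
    le_rfl (by simpa using hD) b ⟨hab, le_rfl⟩
  rwa [gronwallBound_ε0] at this

-- `δ, P, Q, R, W` stand for `f(X) - f(x⋆)`, `‖Ẋ‖²`, `‖∇f(X)‖²`, `‖X - x⋆‖²` and the squared
-- mixed term of `contLyap`; `ag` and `vg` for `⟪X - x⋆, ∇f(X)⟫` and `⟪(d/dt)∇f(X), Ẋ⟫`.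
theorem lyapunov_rate_arith {μ c t δ P Q R ag vg W : ℝ} (hμ : 0 < μ) (hc : 0 < c)
    (hμc : μ * c ^ 2 < 1) (ht : 4 ≤ μ * c * t) (hP : 0 ≤ P) (hQ : 0 ≤ Q) (hR : 0 ≤ R)
    (hvg : μ * P ≤ vg) (hag : δ + μ / 2 * R ≤ ag) (hPL : 2 * μ * δ ≤ Q)
    (hW : W ≤ 3 * (t ^ 2 * P + 4 * R + t ^ 2 * c ^ 2 * Q)) :
    (4 * t + 2 * c) * δ - 2 * t * P - t ^ 2 * c * vg - (2 * t + c) * ag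
        - t * c * (t + c / 2) * Q
      ≤ -(μ * c / 4) * (2 * t * (t + c) * δ + t ^ 2 / 2 * P + 1 / 2 * W) := by
  have ht0 : 0 < t := pos_of_mul_pos_right (a := μ * c) (by linarith) (by positivity)
  have hct : c ≤ t := le_of_mul_le_mul_left (by nlinarith) (by positivity : 0 < μ * c)
  have hderiv : (4 * t + 2 * c) * δ - 2 * t * P - t ^ 2 * c * vg - (2 * t + c) * ag
        - t * c * (t + c / 2) * Q
      ≤ (2 * t + c) * δ - (2 * t + μ * c * t ^ 2) * P - μ * (2 * t + c) / 2 * R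
        - t * c * (t + c / 2) * Q := by
    nlinarith [mul_le_mul_of_nonneg_left hvg (by positivity : 0 ≤ t ^ 2 * c),
      mul_le_mul_of_nonneg_left hag (by positivity : 0 ≤ 2 * t + c)]
  have hlyap : -(μ * c / 4) * (2 * t * (t + c) * δ + 2 * t ^ 2 * P + 6 * R
        + 3 / 2 * t ^ 2 * c ^ 2 * Q)
      ≤ -(μ * c / 4) * (2 * t * (t + c) * δ + t ^ 2 / 2 * P + 1 / 2 * W) := by
    nlinarith [mul_le_mul_of_nonneg_left hW (by positivity : 0 ≤ μ * c / 8)]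
  set a := (2 * t + c) + μ * c * t * (t + c) / 2 with ha
  have hδ : a * δ ≤ a / (2 * μ) * Q := by
    rw [div_mul_eq_mul_div, le_div_iff₀ (by positivity)]
    nlinarith [mul_le_mul_of_nonneg_left hPL (by positivity : 0 ≤ a)]
  have hQcoef : a / (2 * μ) + 3 * μ * c ^ 3 * t ^ 2 / 8 ≤ t * c * (t + c / 2) := by
    rw [div_add' _ _ _ (by positivity), div_le_iff₀ (by positivity)]
    nlinarith [mul_le_mul_of_nonneg_left hμc.le (by positivity : 0 ≤ 3 * μ * c * t ^ 2),
      mul_le_mul_of_nonneg_left ht (by positivity : 0 ≤ 2 * t + c)]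
  rw [ha] at hδ hQcoef
  nlinarith [mul_le_mul_of_nonneg_right hQcoef hQ, mul_nonneg (sub_nonneg.2 hct) hR,
    mul_nonneg (by positivity : 0 ≤ 2 * t + μ * c * t ^ 2 / 2) hP]

-- `E'(t)` along a solution of the ODE, where `G = d/dt ∇F(X)`.
noncomputable def contLyapDeriv {d : ℕ} (s : ℝ) (F : EuclideanSpace ℝ (Fin d) → ℝ)
    (F' : EuclideanSpace ℝ (Fin d) → EuclideanSpace ℝ (Fin d))
    (X V G : ℝ → EuclideanSpace ℝ (Fin d)) (xstar : EuclideanSpace ℝ (Fin d)) (t : ℝ) : ℝ :=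
  (4 * t + 2 * √s) * (F (X t) - F xstar) - 2 * t * ‖V t‖ ^ 2 - t ^ 2 * √s * ⟪G t, V t⟫
    - (2 * t + √s) * ⟪X t - xstar, F' (X t)⟫ - t * √s * (t + √s / 2) * ‖F' (X t)‖ ^ 2

section GradientCorrectionODE

variable {d : ℕ} {s t : ℝ} {f : EuclideanSpace ℝ (Fin d) → ℝ}
  {f' : EuclideanSpace ℝ (Fin d) → EuclideanSpace ℝ (Fin d)}
  {X X' X'' G' : ℝ → EuclideanSpace ℝ (Fin d)} {xstar : EuclideanSpace ℝ (Fin d)}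

theorem smul_accel_eq_of_ode (ht : 0 < t)
    (hode : X'' t + (3 / t) • X' t + √s • G' t + (1 + 3 * √s / (2 * t)) • f' (X t) = 0) :
    t • X'' t = -((3 : ℝ) • X' t + (t * √s) • G' t + (t + 3 * √s / 2) • f' (X t)) := by
  rw [eq_neg_iff_add_eq_zero]
  linear_combination (norm := skip) t • hode
  match_scalars <;> field_simp <;> ring

theorem hasDerivAt_contLyap_momentum (ht : 0 < t) (hX : HasDerivAt X (X' t) t)
    (hX' : HasDerivAt X' (X'' t) t) (hG' : HasDerivAt (fun τ => f' (X τ)) (G' t) t)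
    (hode : X'' t + (3 / t) • X' t + √s • G' t + (1 + 3 * √s / (2 * t)) • f' (X t) = 0) :
    HasDerivAt (fun τ => τ • X' τ + (2 : ℝ) • (X τ - xstar) + (τ * √s) • f' (X τ))
      (-(t + √s / 2) • f' (X t)) t := by
  refine ((((hasDerivAt_id' t).smul hX').add ((hX.sub_const xstar).const_smul (2 : ℝ))).add
    (((hasDerivAt_id' t).mul_const √s).smul hG')).congr_deriv ?_
  rw [smul_accel_eq_of_ode ht hode]
  module

theorem hasDerivAt_contLyap (ht : 0 < t) (hf : HasGradientAt f (f' (X t)) (X t))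
    (hX : HasDerivAt X (X' t) t)
    (hX' : HasDerivAt X' (X'' t) t) (hG' : HasDerivAt (fun τ => f' (X τ)) (G' t) t)
    (hode : X'' t + (3 / t) • X' t + √s • G' t + (1 + 3 * √s / (2 * t)) • f' (X t) = 0) :
    HasDerivAt (contLyap s f f' X X' xstar) (contLyapDeriv s f f' X X' G' xstar t) t := by
  have hfX : HasDerivAt (fun τ => f (X τ)) ⟪f' (X t), X' t⟫ t := by
    have h := hf.hasFDerivAt.comp_hasDerivAt t hX
    simp only [InnerProductSpace.toDual_apply_apply] at h
    exact h
  have hpot := (((hasDerivAt_id' t).const_mul 2).mul ((hasDerivAt_id' t).add_const √s)).mul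
    (hfX.sub_const (f xstar))
  have hkin := ((hasDerivAt_pow 2 t).div_const 2).mul hX'.norm_sq
  have hmom := ((hasDerivAt_contLyap_momentum (xstar := xstar) ht hX hX' hG' hode).norm_sq
    ).const_mul (1 / 2 : ℝ)
  refine ((hpot.add hkin).add hmom).congr_deriv ?_
  have hacc := congrArg (⟪X' t, ·⟫) (smul_accel_eq_of_ode ht hode)
  simp only [inner_smul_right, inner_neg_right, inner_add_right, real_inner_self_eq_norm_sq]
    at hacc
  simp only [contLyapDeriv, Pi.mul_apply, inner_smul_right, inner_add_left, inner_smul_left,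
    real_inner_self_eq_norm_sq, real_inner_comm (X' t), RCLike.conj_to_real]
  linear_combination t * hacc

theorem contLyapDeriv_le_neg_mul_contLyap {μ : ℝ} (hμ : 0 < μ) (hs : 0 < s) (hμs : μ * s < 1)
    (ht : 4 / (μ * √s) ≤ t) (hsc : ConvexOn ℝ univ (fun z => f z - μ / 2 * ‖z‖ ^ 2))
    (hf : ∀ z, HasGradientAt f (f' z) z) (hX : HasDerivAt X (X' t) t)
    (hG' : HasDerivAt (fun τ => f' (X τ)) (G' t) t) :
    contLyapDeriv s f f' X X' G' xstar t ≤ -(μ * √s / 4) * contLyap s f f' X X' xstar t := by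
  have hc : 0 < √s := sqrt_pos.2 hs
  have hvG := hX.mul_norm_sq_le_inner_of_strongly_monotone
    (hsc.mul_norm_sub_sq_le_inner_gradient_sub hf) hG'
  have hgap : f (X t) - f xstar + μ / 2 * ‖X t - xstar‖ ^ 2 ≤ ⟪X t - xstar, f' (X t)⟫ := by
    have := hsc.add_inner_add_sq_le_of_sub_half_sq (hf (X t)) xstar
    rw [norm_sub_rev, ← neg_sub, inner_neg_right, real_inner_comm] at this
    linarith
  have hmix := norm_add₃_sq_le (t • X' t) ((2 : ℝ) • (X t - xstar)) ((t * √s) • f' (X t))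
  simp only [norm_smul, mul_pow, Real.norm_eq_abs, sq_abs] at hmix
  exact lyapunov_rate_arith hμ hc (by rwa [sq_sqrt hs.le]) ((div_le_iff₀' (by positivity)).1 ht)
    (sq_nonneg _) (sq_nonneg _) (sq_nonneg _) hvG hgap
    (hsc.two_mul_sub_le_norm_gradient_sq hμ.le (hf (X t)) xstar) (by linarith)

theorem mul_sub_le_contLyap :
    2 * t * (t + √s) * (f (X t) - f xstar) ≤ contLyap s f f' X X' xstar t :=
  le_add_of_le_of_nonneg (le_add_of_nonneg_right (by positivity)) (by positivity)

end GradientCorrectionODE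

theorem gradient_correction_ode_linear_convergence_general {d : ℕ} (μ L s : ℝ)
    (hμ : 0 < μ) (hμL : μ ≤ L) (hs : 0 < s) (hsL : s < 1 / L)
    (f : EuclideanSpace ℝ (Fin d) → ℝ)
    (f' : EuclideanSpace ℝ (Fin d) → EuclideanSpace ℝ (Fin d))
    (hdiff : ∀ z, HasGradientAt f (f' z) z)
    (hsc : ConvexOn ℝ Set.univ (fun z => f z - μ / 2 * ‖z‖ ^ 2))
    (xstar : EuclideanSpace ℝ (Fin d))
    (X X' X'' G' : ℝ → EuclideanSpace ℝ (Fin d))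
    (hX : ∀ t : ℝ, 0 < t → HasDerivAt X (X' t) t)
    (hX' : ∀ t : ℝ, 0 < t → HasDerivAt X' (X'' t) t)
    (hG' : ∀ t : ℝ, 0 < t → HasDerivAt (fun τ => f' (X τ)) (G' t) t)
    (hode : ∀ t : ℝ, 0 < t →
      X'' t + (3 / t) • X' t + Real.sqrt s • G' t
        + (1 + 3 * Real.sqrt s / (2 * t)) • f' (X t) = 0)
    :
    ∀ t : ℝ, 4 / (μ * Real.sqrt s) ≤ t →
      f (X t) - f xstar ≤
        contLyap s f f' X X' xstar (4 / (μ * Real.sqrt s)) / (2 * t * (t + Real.sqrt s)) *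
          Real.exp (-(μ * Real.sqrt s / 4) * (t - 4 / (μ * Real.sqrt s))) := by
  have hμs : μ * s < 1 := by
    have := (lt_div_iff₀ (hμ.trans_le hμL)).1 hsL
    nlinarith
  set T := 4 / (μ * √s)
  have hpos : ∀ τ, T ≤ τ → 0 < τ := fun τ hτ => lt_of_lt_of_le (by positivity) hτ
  intro t ht
  have hdecay : contLyap s f f' X X' xstar t
      ≤ contLyap s f f' X X' xstar T * exp (-(μ * √s / 4) * (t - T)) :=
    le_mul_exp_of_hasDerivAt_le_neg_mul ht
      (fun τ hτ => hasDerivAt_contLyap (hpos τ hτ.1) (hdiff (X τ)) (hX τ (hpos τ hτ.1))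
        (hX' τ (hpos τ hτ.1)) (hG' τ (hpos τ hτ.1)) (hode τ (hpos τ hτ.1)))
      (fun τ hτ => contLyapDeriv_le_neg_mul_contLyap hμ hs hμs hτ.1 hsc hdiff
        (hX τ (hpos τ hτ.1)) (hG' τ (hpos τ hτ.1)))
  have hgap : 2 * t * (t + √s) * (f (X t) - f xstar) ≤ contLyap s f f' X X' xstar t :=
    mul_sub_le_contLyap
  have ht0 := hpos t ht
  rw [div_mul_eq_mul_div, le_div_iff₀ (by positivity)]
  linarith

theorem gradient_correction_ode_linear_convergence {d : ℕ} (μ L s : ℝ)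
    (hμ : 0 < μ) (hμL : μ ≤ L) (hs : 0 < s) (hsL : s < 1 / L)
    (f : EuclideanSpace ℝ (Fin d) → ℝ)
    (f' : EuclideanSpace ℝ (Fin d) → EuclideanSpace ℝ (Fin d))
    (hf2 : ContDiff ℝ 2 f)
    (hdiff : ∀ z, HasGradientAt f (f' z) z)
    (hlip : ∀ z w, ‖f' z - f' w‖ ≤ L * ‖z - w‖)
    (hsc : ConvexOn ℝ Set.univ (fun z => f z - μ / 2 * ‖z‖ ^ 2))
    (xstar : EuclideanSpace ℝ (Fin d)) (hmin : ∀ z, f xstar ≤ f z)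
    (huniq : ∀ z, (∀ w, f z ≤ f w) → z = xstar)
    (X X' X'' G' : ℝ → EuclideanSpace ℝ (Fin d))
    (hX : ∀ t : ℝ, 0 < t → HasDerivAt X (X' t) t)
    (hX' : ∀ t : ℝ, 0 < t → HasDerivAt X' (X'' t) t)
    (hG' : ∀ t : ℝ, 0 < t → HasDerivAt (fun τ => f' (X τ)) (G' t) t)
    (hode : ∀ t : ℝ, 0 < t →
      X'' t + (3 / t) • X' t + Real.sqrt s • G' t
        + (1 + 3 * Real.sqrt s / (2 * t)) • f' (X t) = 0)
    :
    ∀ t : ℝ, 4 / (μ * Real.sqrt s) ≤ t →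
      f (X t) - f xstar ≤
        contLyap s f f' X X' xstar (4 / (μ * Real.sqrt s)) / (2 * t * (t + Real.sqrt s)) *
          Real.exp (-(μ * Real.sqrt s / 4) * (t - 4 / (μ * Real.sqrt s))) :=
  gradient_correction_ode_linear_convergence_general μ L s hμ hμL hs hsL f f' hdiff hsc xstar X X'
    X'' G' hX hX' hG' hode
end

section
/- Let 0 < μ ≤ L, let f ∈ S¹_{μ,L}(ℝ^d), let g : ℝ^d → ℝ be convex and continuous, set Φ = f + g, and let 0 < s < 1/L. Then for all x, y ∈ ℝ^d, Φ(y − sG_s(y)) − Φ(x) ≤ ⟨G_s(y), y − x⟩ − (s/2)‖G_s(y)‖² − (μ/2)‖y − x‖². -/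
/-!
Put `p = P y = y - s • G y`. Three inequalities are added up: the descent lemma for the
`L`-smooth `f` between `y` and `p` (whose quadratic term `L s² ‖G y‖² / 2` is at most
`s ‖G y‖² / 2` because `L s ≤ 1`), the strong-convexity lower bound for `f` between `y` and `x`,
and the optimality condition of the proximal problem, which says that `f' y - G y` is a
subgradient of `g` at `p`. All terms involving `f' y` cancel.
-/

open scoped RealInnerProductSpace
open Set AffineMap Filter Topology

variable {E : Type*} [NormedAddCommGroup E] [InnerProductSpace ℝ E] [CompleteSpace E]

theorem HasGradientAt.sub {φ ψ : E → ℝ} {φ' ψ' x : E} (hφ : HasGradientAt φ φ' x)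
    (hψ : HasGradientAt ψ ψ' x) : HasGradientAt (fun z => φ z - ψ z) (φ' - ψ') x := by
  rw [hasGradientAt_iff_hasFDerivAt, map_sub]
  exact (hasGradientAt_iff_hasFDerivAt.mp hφ).sub (hasGradientAt_iff_hasFDerivAt.mp hψ)

theorem hasGradientAt_mul_norm_sub_sq (a : ℝ) (c x : E) :
    HasGradientAt (fun w => a * ‖w - c‖ ^ 2) ((2 * a) • (x - c)) x := by
  rw [hasGradientAt_iff_hasFDerivAt]
  refine ((((hasFDerivAt_id x).sub_const c).norm_sq).const_mul a).congr_fderiv ?_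
  ext v
  simp only [id_eq, map_sub, ContinuousLinearMap.comp_id, smul_apply, sub_apply, coe_innerSL_apply,
    nsmul_eq_mul, Nat.cast_ofNat, smul_eq_mul, map_smul, InnerProductSpace.toDual_apply_apply]
  ring

theorem HasGradientAt.hasDerivAt_comp_lineMap {φ : E → ℝ} {φ' a b : E} {t : ℝ}
    (h : HasGradientAt φ φ' (lineMap a b t)) :
    HasDerivAt (fun t => φ (lineMap a b t)) ⟪φ', b - a⟫ t := by
  simpa [Function.comp_def] using
    (hasGradientAt_iff_hasFDerivAt.mp h).comp_hasDerivAt t hasDerivAt_lineMap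

theorem ConvexOn.add_inner_sub_le {φ : E → ℝ} {φ' y : E} (hφ : ConvexOn ℝ univ φ)
    (h : HasGradientAt φ φ' y) (x : E) : φ y + ⟪φ', x - y⟫ ≤ φ x := by
  have hd := HasGradientAt.hasDerivAt_comp_lineMap (b := x) (t := 0) (by simpa using h)
  have := (hφ.comp_affineMap (lineMap y x)).le_slope_of_hasDerivAt (mem_univ 0) (mem_univ 1)
    zero_lt_one hd
  simp only [slope_def_field, Function.comp_apply, lineMap_apply_one, lineMap_apply_zero,
    sub_zero, div_one] at this
  linarith

theorem StrongConvexOn.add_inner_sub_add_mul_norm_sq_le {μ : ℝ} {f : E → ℝ} {f' y : E}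
    (hf : StrongConvexOn univ μ f) (h : HasGradientAt f f' y) (x : E) :
    f y + ⟪f', x - y⟫ + μ / 2 * ‖x - y‖ ^ 2 ≤ f x := by
  have hq := hasGradientAt_mul_norm_sub_sq (μ / 2) 0 y
  simp only [sub_zero] at hq
  have := (strongConvexOn_iff_convex.mp hf).add_inner_sub_le (h.sub hq) x
  simp only [inner_sub_left, inner_sub_right, real_inner_smul_left, real_inner_self_eq_norm_sq,
    norm_sub_sq_real, real_inner_comm y x] at this ⊢
  linarith

theorem le_add_inner_sub_add_mul_norm_sq_of_lipschitz_gradient {L : ℝ} {f : E → ℝ} {f' : E → E}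
    (hf : ∀ z, HasGradientAt f (f' z) z) (hlip : ∀ z w, ‖f' z - f' w‖ ≤ L * ‖z - w‖) (y x : E) :
    f x ≤ f y + ⟪f' y, x - y⟫ + L / 2 * ‖x - y‖ ^ 2 := by
  set v := x - y
  -- `f` along the segment minus its quadratic model; Lipschitz continuity of `f'` makes it antitone.
  set u : ℝ → ℝ := fun t => f (lineMap y x t) - t * ⟪f' y, v⟫ - L / 2 * t ^ 2 * ‖v‖ ^ 2
  have hu : ∀ t, HasDerivAt u (⟪f' (lineMap y x t) - f' y, v⟫ - L * t * ‖v‖ ^ 2) t := by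
    intro t
    have hline : HasDerivAt (fun t => f (lineMap y x t)) ⟪f' (lineMap y x t), v⟫ t :=
      (hf _).hasDerivAt_comp_lineMap
    refine ((hline.sub ((hasDerivAt_id t).mul_const ⟪f' y, v⟫)).sub
      (((hasDerivAt_pow 2 t).const_mul (L / 2)).mul_const (‖v‖ ^ 2))).congr_deriv ?_
    simp only [inner_sub_left]
    ring
  have hu' : ∀ t, 0 ≤ t → ⟪f' (lineMap y x t) - f' y, v⟫ ≤ L * t * ‖v‖ ^ 2 := by
    intro t ht
    have hγ : lineMap y x t - y = t • v := by simp [lineMap_apply, v]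
    calc ⟪f' (lineMap y x t) - f' y, v⟫ ≤ ‖f' (lineMap y x t) - f' y‖ * ‖v‖ :=
          real_inner_le_norm _ _
      _ ≤ L * ‖lineMap y x t - y‖ * ‖v‖ := by gcongr; exact hlip _ _
      _ = L * t * ‖v‖ ^ 2 := by
          rw [hγ, norm_smul, Real.norm_of_nonneg ht]; ring
  have hanti : AntitoneOn u (Ici 0) :=
    antitoneOn_of_hasDerivWithinAt_nonpos (convex_Ici 0)
      (fun t _ => (hu t).continuousAt.continuousWithinAt) (fun t _ => (hu t).hasDerivWithinAt)
      (fun t ht => by rw [interior_Ici] at ht; linarith [hu' t (le_of_lt ht)])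
  have := hanti self_mem_Ici (mem_Ici.mpr zero_le_one) zero_le_one
  simp only [u, lineMap_apply_one, lineMap_apply_zero] at this
  linarith

theorem IsMinOn.le_add_inner_of_hasGradientAt {h g : E → ℝ} {h' p : E}
    (hmin : IsMinOn (fun w => h w + g w) univ p) (hh : HasGradientAt h h' p)
    (hg : ConvexOn ℝ univ g) (x : E) : g p ≤ g x + ⟪h', x - p⟫ := by
  have hd := HasGradientAt.hasDerivAt_comp_lineMap (b := x) (t := 0) (by simpa using hh)
  have hslope : Tendsto (slope (fun t : ℝ => h (lineMap p x t)) 0) (𝓝[>] 0) (𝓝 ⟪h', x - p⟫) :=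
    (hasDerivAt_iff_tendsto_slope.mp hd).mono_left (nhdsWithin_mono _ fun t ht => ne_of_gt ht)
  have hbound : ∀ᶠ t in 𝓝[>] (0 : ℝ), g p - g x ≤ slope (fun t => h (lineMap p x t)) 0 t := by
    filter_upwards [Ioc_mem_nhdsGT zero_lt_one] with t ⟨ht0, ht1⟩
    have hmin_t := isMinOn_iff.mp hmin (lineMap p x t) (mem_univ _)
    have hconv : g (lineMap p x t) ≤ (1 - t) * g p + t * g x := by
      simpa [lineMap_apply_module] using
        hg.2 (mem_univ p) (mem_univ x) (by linarith : 0 ≤ 1 - t) ht0.le (by ring)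
    rw [slope_def_field, sub_zero, le_div_iff₀ ht0, lineMap_apply_zero]
    linarith
  linarith [ge_of_tendsto hslope hbound]

theorem fundamental_proximal_inequality_strongly_convex_general {d : ℕ} (μ L s : ℝ)
    (hs : 0 < s) (hsL : s < 1 / L)
    (f : EuclideanSpace ℝ (Fin d) → ℝ)
    (f' : EuclideanSpace ℝ (Fin d) → EuclideanSpace ℝ (Fin d))
    (hdiff : ∀ z, HasGradientAt f (f' z) z)
    (hlip : ∀ z w, ‖f' z - f' w‖ ≤ L * ‖z - w‖)
    (hsc : ConvexOn ℝ Set.univ (fun z => f z - μ / 2 * ‖z‖ ^ 2))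
    (g : EuclideanSpace ℝ (Fin d) → ℝ)
    (hgconv : ConvexOn ℝ Set.univ g)
    (P G : EuclideanSpace ℝ (Fin d) → EuclideanSpace ℝ (Fin d))
    (hP : ∀ z, IsMinOn (fun w => 1 / (2 * s) * ‖w - (z - s • f' z)‖ ^ 2 + g w) Set.univ (P z))
    (hG : ∀ z, G z = s⁻¹ • (z - P z))
    :
    ∀ x y : EuclideanSpace ℝ (Fin d),
      (f (y - s • G y) + g (y - s • G y)) - (f x + g x) ≤
        ⟪G y, y - x⟫ - s / 2 * ‖G y‖ ^ 2 - μ / 2 * ‖y - x‖ ^ 2 := by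
  intro x y
  have hPy : P y = y - s • G y := by
    rw [hG y, smul_smul, mul_inv_cancel₀ hs.ne', one_smul, sub_sub_cancel]
  have hgrad :
      HasGradientAt (fun w => 1 / (2 * s) * ‖w - (y - s • f' y)‖ ^ 2) (f' y - G y) (P y) := by
    convert hasGradientAt_mul_norm_sub_sq (1 / (2 * s)) (y - s • f' y) (P y) using 1
    have h2s : 2 * (1 / (2 * s)) = s⁻¹ := by field_simp
    rw [h2s, hG y, smul_sub, smul_sub, smul_sub, smul_smul, inv_mul_cancel₀ hs.ne', one_smul]
    abel
  have hdescent := le_add_inner_sub_add_mul_norm_sq_of_lipschitz_gradient hdiff hlip y (P y)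
  have hstrong := (strongConvexOn_iff_convex.mpr hsc).add_inner_sub_add_mul_norm_sq_le (hdiff y) x
  have hprox := (hP y).le_add_inner_of_hasGradientAt hgrad hgconv x
  have hLs : L * s ≤ 1 := by
    have hL : 0 < L := one_div_pos.mp (hs.trans hsL)
    linarith [(lt_div_iff₀ hL).mp hsL]
  have hquad : L / 2 * (s ^ 2 * ‖G y‖ ^ 2) ≤ s / 2 * ‖G y‖ ^ 2 := by
    nlinarith [mul_nonneg hs.le (sq_nonneg ‖G y‖)]
  rw [hPy] at hdescent hprox
  rw [sub_sub_cancel_left] at hdescent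
  simp only [inner_sub_left, inner_sub_right, inner_neg_right,
    real_inner_smul_right, norm_neg, norm_smul, Real.norm_of_nonneg hs.le, mul_pow,
    norm_sub_rev x y, real_inner_self_eq_norm_sq] at hdescent hprox hstrong ⊢
  linarith

theorem fundamental_proximal_inequality_strongly_convex {d : ℕ} (μ L s : ℝ)
    (hμ : 0 < μ) (hμL : μ ≤ L) (hs : 0 < s) (hsL : s < 1 / L)
    (f : EuclideanSpace ℝ (Fin d) → ℝ)
    (f' : EuclideanSpace ℝ (Fin d) → EuclideanSpace ℝ (Fin d))
    (hdiff : ∀ z, HasGradientAt f (f' z) z)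
    (hlip : ∀ z w, ‖f' z - f' w‖ ≤ L * ‖z - w‖)
    (hsc : ConvexOn ℝ Set.univ (fun z => f z - μ / 2 * ‖z‖ ^ 2))
    (g : EuclideanSpace ℝ (Fin d) → ℝ)
    (hgconv : ConvexOn ℝ Set.univ g) (hgcont : Continuous g)
    (P G : EuclideanSpace ℝ (Fin d) → EuclideanSpace ℝ (Fin d))
    (hP : ∀ z, IsMinOn (fun w => 1 / (2 * s) * ‖w - (z - s • f' z)‖ ^ 2 + g w) Set.univ (P z))
    (hG : ∀ z, G z = s⁻¹ • (z - P z))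
    :
    ∀ x y : EuclideanSpace ℝ (Fin d),
      (f (y - s • G y) + g (y - s • G y)) - (f x + g x) ≤
        ⟪G y, y - x⟫ - s / 2 * ‖G y‖ ^ 2 - μ / 2 * ‖y - x‖ ^ 2 :=
  fundamental_proximal_inequality_strongly_convex_general μ L s hs hsL f f' hdiff hlip hsc g hgconv
    P G hP hG
end

section
/- Let 0 < μ ≤ L, let f ∈ S¹_{μ,L}(ℝ^d), and let 0 < s < 1/L. For any x, y ∈ ℝ^d, set x⁺ = y − s∇f(y) and v = (x⁺ − x)/√s. Then f(x⁺) − f(x) ≤ √s(1 − μs)⟨∇f(y), v⟩ + (s²(L − μ)/2)‖∇f(y)‖² − (μs/2)‖v‖². -/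
/-!
Expand `f` to first order at `y` twice: `L`-smoothness bounds `f x⁺` from above, strong
convexity bounds `f x` from below. Since `x⁺ - y = -s ∇f(y)` and `x - y = -(s ∇f(y) + √s v)`,
adding the two bounds gives exactly the claimed right-hand side.
-/

open scoped RealInnerProductSpace

open AffineMap Set

theorem ConvexOn.add_apply_sub_le_of_hasFDerivAt_s9 {E : Type*} [NormedAddCommGroup E] [NormedSpace ℝ E]
    {s : Set E} {g : E → ℝ} {g' : E →L[ℝ] ℝ} {x y : E} (hg : ConvexOn ℝ s g)
    (hx : x ∈ s) (hy : y ∈ s) (hg' : HasFDerivAt g g' y) :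
    g y + g' (x - y) ≤ g x := by
  have hline : ConvexOn ℝ (Icc 0 1) (g ∘ (lineMap y x : ℝ → E)) :=
    (hg.comp_affineMap (lineMap y x : ℝ →ᵃ[ℝ] E)).subset
      (fun _ ht => hg.1.lineMap_mem hy hx ht) (convex_Icc 0 1)
  have hderiv : HasDerivAt (g ∘ (lineMap y x : ℝ → E)) (g' (x - y)) 0 := by
    simpa using hg'.comp_hasDerivAt_of_eq (0 : ℝ) hasDerivAt_lineMap (lineMap_apply_zero y x).symm
  have := hline.le_slope_of_hasDerivAt (left_mem_Icc.2 zero_le_one)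
    (right_mem_Icc.2 zero_le_one) zero_lt_one hderiv
  simp only [slope_def_field, Function.comp_apply, lineMap_apply_zero, lineMap_apply_one] at this
  linarith

section InnerProductSpace

variable {E : Type*} [NormedAddCommGroup E] [InnerProductSpace ℝ E] [CompleteSpace E]
  {f : E → ℝ} {f' : E → E}

theorem ConvexOn.add_inner_add_mul_norm_sq_le {μ : ℝ} {s : Set E} {g x y : E}
    (hsc : ConvexOn ℝ s (fun z => f z - μ / 2 * ‖z‖ ^ 2)) (hx : x ∈ s) (hy : y ∈ s)
    (hf : HasGradientAt f g y) :
    f y + ⟪g, x - y⟫ + μ / 2 * ‖x - y‖ ^ 2 ≤ f x := by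
  have hg := hf.hasFDerivAt.sub ((hasStrictFDerivAt_norm_sq y).hasFDerivAt.const_mul (μ / 2))
  have := hsc.add_apply_sub_le_of_hasFDerivAt_s9 hx hy hg
  have hsq : ‖x‖ ^ 2 = ‖y‖ ^ 2 + 2 * ⟪y, x - y⟫ + ‖x - y‖ ^ 2 := by
    rw [← norm_add_sq_real, add_sub_cancel]
  simp only [sub_apply, InnerProductSpace.toDual_apply_apply,
    smul_apply, coe_innerSL_apply, nsmul_eq_mul, smul_eq_mul] at this
  rw [hsq] at this
  linarith

theorem le_add_inner_add_mul_norm_sq_of_lipschitz_gradient {L : ℝ}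
    (hf : ∀ z, HasGradientAt f (f' z) z) (hlip : ∀ z w, ‖f' z - f' w‖ ≤ L * ‖z - w‖) (a b : E) :
    f b ≤ f a + ⟪f' a, b - a⟫ + L / 2 * ‖b - a‖ ^ 2 := by
  set h : ℝ → ℝ := fun t => f (lineMap a b t) - t * ⟪f' a, b - a⟫ - t ^ 2 * (L / 2 * ‖b - a‖ ^ 2)
  have hderiv (t : ℝ) : HasDerivAt h
      (⟪f' (lineMap a b t), b - a⟫ - ⟪f' a, b - a⟫ - L * t * ‖b - a‖ ^ 2) t := by
    have hline : HasDerivAt (f ∘ lineMap a b) ⟪f' (lineMap a b t), b - a⟫ t := by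
      simpa using (hf _).hasFDerivAt.comp_hasDerivAt t hasDerivAt_lineMap
    have hquad : HasDerivAt (fun t => t ^ 2 * (L / 2 * ‖b - a‖ ^ 2)) (L * t * ‖b - a‖ ^ 2) t :=
      ((hasDerivAt_pow 2 t).mul_const _).congr_deriv (by ring)
    exact (hline.sub (hasDerivAt_mul_const _)).sub hquad
  have hanti : AntitoneOn h (Icc 0 1) := by
    refine antitoneOn_of_deriv_nonpos (convex_Icc 0 1)
      (fun t _ => (hderiv t).continuousAt.continuousWithinAt)
      (fun t _ => (hderiv t).differentiableAt.differentiableWithinAt) fun t ht => ?_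
    rw [interior_Icc] at ht
    have hgrowth : ⟪f' (lineMap a b t) - f' a, b - a⟫ ≤ L * t * ‖b - a‖ ^ 2 :=
      calc ⟪f' (lineMap a b t) - f' a, b - a⟫
          ≤ ‖f' (lineMap a b t) - f' a‖ * ‖b - a‖ := real_inner_le_norm _ _
        _ ≤ L * ‖lineMap a b t - a‖ * ‖b - a‖ := by gcongr; exact hlip _ _
        _ = L * t * ‖b - a‖ ^ 2 := by
          rw [lineMap_apply_module', add_sub_cancel_right, norm_smul, Real.norm_of_nonneg ht.1.le]
          ring
    rw [(hderiv t).deriv, ← inner_sub_left]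
    linarith [hgrowth]
  have := hanti (left_mem_Icc.2 zero_le_one) (right_mem_Icc.2 zero_le_one) zero_le_one
  simp only [h, lineMap_apply_zero, lineMap_apply_one] at this
  linarith

end InnerProductSpace

theorem potential_energy_key_inequality_general {d : ℕ} (μ L s : ℝ)
    (hs : 0 < s)
    (f : EuclideanSpace ℝ (Fin d) → ℝ)
    (f' : EuclideanSpace ℝ (Fin d) → EuclideanSpace ℝ (Fin d))
    (hdiff : ∀ z, HasGradientAt f (f' z) z)
    (hlip : ∀ z w, ‖f' z - f' w‖ ≤ L * ‖z - w‖)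
    (hsc : ConvexOn ℝ Set.univ (fun z => f z - μ / 2 * ‖z‖ ^ 2))
    :
    ∀ x y xplus v : EuclideanSpace ℝ (Fin d),
      xplus = y - s • f' y → v = (Real.sqrt s)⁻¹ • (xplus - x) →
      f xplus - f x ≤
        Real.sqrt s * (1 - μ * s) * ⟪f' y, v⟫
          + s ^ 2 * (L - μ) / 2 * ‖f' y‖ ^ 2 - μ * s / 2 * ‖v‖ ^ 2 := by
  intro x y xplus v hxplus hv
  set g := f' y
  have hσ : Real.sqrt s ^ 2 = s := Real.sq_sqrt hs.le
  have hstep : xplus - y = -(s • g) := by rw [hxplus]; abel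
  have hback : x - y = -(s • g + Real.sqrt s • v) := by
    rw [hv, smul_inv_smul₀ (Real.sqrt_pos.2 hs).ne', hxplus]; abel
  have upper := le_add_inner_add_mul_norm_sq_of_lipschitz_gradient hdiff hlip y xplus
  have lower := hsc.add_inner_add_mul_norm_sq_le (mem_univ x) (mem_univ y) (hdiff y)
  simp only [hstep, hback, inner_neg_right, norm_neg, inner_add_right, real_inner_smul_right,
    norm_add_sq_real, norm_smul, real_inner_smul_left, mul_pow,
    Real.norm_eq_abs, sq_abs, hσ] at upper lower
  linear_combination upper + lower

theorem potential_energy_key_inequality {d : ℕ} (μ L s : ℝ)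
    (hμ : 0 < μ) (hμL : μ ≤ L) (hs : 0 < s) (hsL : s < 1 / L)
    (f : EuclideanSpace ℝ (Fin d) → ℝ)
    (f' : EuclideanSpace ℝ (Fin d) → EuclideanSpace ℝ (Fin d))
    (hdiff : ∀ z, HasGradientAt f (f' z) z)
    (hlip : ∀ z w, ‖f' z - f' w‖ ≤ L * ‖z - w‖)
    (hsc : ConvexOn ℝ Set.univ (fun z => f z - μ / 2 * ‖z‖ ^ 2))
    :
    ∀ x y xplus v : EuclideanSpace ℝ (Fin d),
      xplus = y - s • f' y → v = (Real.sqrt s)⁻¹ • (xplus - x) →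
      f xplus - f x ≤
        Real.sqrt s * (1 - μ * s) * ⟪f' y, v⟫
          + s ^ 2 * (L - μ) / 2 * ‖f' y‖ ^ 2 - μ * s / 2 * ‖v‖ ^ 2 :=
  potential_energy_key_inequality_general μ L s hs f f' hdiff hlip hsc
end

section
/- Let 0 < μ ≤ L, let f ∈ S¹_{μ,L}(ℝ^d) with unique minimizer x⋆, and let 0 < s < 1/L. For any y ∈ ℝ^d, set x⁺ = y − s∇f(y). Then f(x⁺) − f(x⋆) ≤ ⟨∇f(y), y − x⋆⟩ − (s/2)‖∇f(y)‖² − (μ/2)‖x⁺ − x⋆‖². -/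
/-!
Write `g = ∇f(y)`. The descent lemma for an `L`-smooth `f` gives `f(x⁺) ≤ f(y) - (s/2)‖g‖²` as
soon as `sL ≤ 1`, and strong convexity at `y` gives
`f(x⋆) ≥ f(y) - ⟪g, y - x⋆⟫ + (μ/2)‖y - x⋆‖²`. Subtracting yields the claim with `‖y - x⋆‖` in
place of `‖x⁺ - x⋆‖`. The step does not move away from `x⋆`: combining the same two bounds with
`f(x⋆) ≤ f(x⁺)` gives `⟪g, y - x⋆⟫ ≥ (s/2)‖g‖²`, which is exactly `‖x⁺ - x⋆‖ ≤ ‖y - x⋆‖`.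
-/

open scoped RealInnerProductSpace

open Set
open AffineMap (lineMap lineMap_apply_zero lineMap_apply_one hasDerivAt_lineMap)

section NormedSpace

variable {E : Type*} [NormedAddCommGroup E] [NormedSpace ℝ E]

theorem HasFDerivAt.hasDerivAt_comp_lineMap {G : Type*} [NormedAddCommGroup G]
    [NormedSpace ℝ G] {f : E → G} {f' : E →L[ℝ] G} {x y : E} {t : ℝ}
    (hf : HasFDerivAt f f' (lineMap x y t)) :
    HasDerivAt (fun t ↦ f (lineMap x y t)) (f' (y - x)) t :=
  hf.comp_hasDerivAt t hasDerivAt_lineMap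

theorem ConvexOn.apply_add_fderiv_le {s : Set E} {f : E → ℝ} {f' : E →L[ℝ] ℝ} {x y : E}
    (hf : ConvexOn ℝ s f) (hx : x ∈ s) (hy : y ∈ s) (hfx : HasFDerivAt f f' x) :
    f x + f' (y - x) ≤ f y := by
  have hline : ConvexOn ℝ (lineMap x y ⁻¹' s) (f ∘ lineMap (k := ℝ) x y) :=
    hf.comp_affineMap _
  have hderiv : HasDerivAt (f ∘ lineMap (k := ℝ) x y) (f' (y - x)) 0 :=
    HasFDerivAt.hasDerivAt_comp_lineMap (by simpa using hfx)
  have hslope := hline.le_slope_of_hasDerivAt (by simpa using hx) (by simpa using hy) one_pos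
    hderiv
  simp only [slope_def_field, Function.comp_apply, lineMap_apply_one, lineMap_apply_zero,
    sub_zero, div_one] at hslope
  linarith

theorem apply_le_add_fderiv_add_of_lipschitz {f : E → ℝ} {f' : E → E →L[ℝ] ℝ} {L : ℝ}
    (hf : ∀ z, HasFDerivAt f (f' z) z) (hlip : ∀ z w, ‖f' z - f' w‖ ≤ L * ‖z - w‖) (x y : E) :
    f y ≤ f x + f' x (y - x) + L / 2 * ‖y - x‖ ^ 2 := by
  set F : ℝ → ℝ := fun t ↦ f (lineMap x y t) - t * f' x (y - x) - L / 2 * t ^ 2 * ‖y - x‖ ^ 2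
  have hF : ∀ t, HasDerivAt F
      (f' (lineMap x y t) (y - x) - f' x (y - x) - L * t * ‖y - x‖ ^ 2) t := fun t ↦ by
    have hline := (hf (lineMap x y t)).hasDerivAt_comp_lineMap
    have hlin := (hasDerivAt_id t).mul_const (f' x (y - x))
    have hsq := ((hasDerivAt_pow 2 t).const_mul (L / 2)).mul_const (‖y - x‖ ^ 2)
    exact ((hline.sub hlin).sub hsq).congr_deriv (by simp only [Nat.cast_ofNat]; ring)
  have hanti : AntitoneOn F (Icc 0 1) := by
    refine antitoneOn_of_hasDerivWithinAt_nonpos (convex_Icc 0 1)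
      (fun t _ ↦ (hF t).continuousAt.continuousWithinAt) (fun t _ ↦ (hF t).hasDerivWithinAt)
      fun t ht ↦ ?_
    rw [interior_Icc] at ht
    refine sub_nonpos.mpr ?_
    have hdist : ‖lineMap x y t - x‖ = t * ‖y - x‖ := by
      rw [← dist_eq_norm, dist_lineMap_left, Real.norm_of_nonneg ht.1.le, dist_eq_norm']
    calc f' (lineMap x y t) (y - x) - f' x (y - x)
        = (f' (lineMap x y t) - f' x) (y - x) := rfl
      _ ≤ ‖f' (lineMap x y t) - f' x‖ * ‖y - x‖ := (le_abs_self _).trans (by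
          simpa only [Real.norm_eq_abs] using (f' (lineMap x y t) - f' x).le_opNorm (y - x))
      _ ≤ L * (t * ‖y - x‖) * ‖y - x‖ := by
          gcongr; simpa only [hdist] using hlip (lineMap x y t) x
      _ = L * t * ‖y - x‖ ^ 2 := by ring
  have h10 := hanti (left_mem_Icc.mpr zero_le_one) (right_mem_Icc.mpr zero_le_one) zero_le_one
  simp only [F, lineMap_apply_one, lineMap_apply_zero] at h10
  linarith

end NormedSpace

section InnerProductSpace

variable {F : Type*} [NormedAddCommGroup F] [InnerProductSpace ℝ F] [CompleteSpace F]

theorem StrongConvexOn.apply_add_inner_add_le {s : Set F} {m : ℝ} {f : F → ℝ} {g x y : F}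
    (hf : StrongConvexOn s m f) (hx : x ∈ s) (hy : y ∈ s) (hfx : HasGradientAt f g x) :
    f x + ⟪g, y - x⟫ + m / 2 * ‖y - x‖ ^ 2 ≤ f y := by
  have hderiv := (hasGradientAt_iff_hasFDerivAt.mp hfx).sub
    ((hasStrictFDerivAt_norm_sq x).hasFDerivAt.const_mul (m / 2))
  have hconv := (strongConvexOn_iff_convex.mp hf).apply_add_fderiv_le hx hy hderiv
  have hsq : ‖y‖ ^ 2 = ‖x‖ ^ 2 + 2 * ⟪x, y - x⟫ + ‖y - x‖ ^ 2 := by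
    rw [← norm_add_sq_real, add_sub_cancel]
  simp only [sub_apply, smul_apply, InnerProductSpace.toDual_apply_apply, innerSL_apply_apply,
    smul_eq_mul, nsmul_eq_mul, Nat.cast_ofNat] at hconv
  rw [hsq] at hconv
  linarith

theorem apply_le_add_inner_add_of_lipschitz_gradient {f : F → ℝ} {f' : F → F} {L : ℝ}
    (hf : ∀ z, HasGradientAt f (f' z) z) (hlip : ∀ z w, ‖f' z - f' w‖ ≤ L * ‖z - w‖) (x y : F) :
    f y ≤ f x + ⟪f' x, y - x⟫ + L / 2 * ‖y - x‖ ^ 2 :=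
  apply_le_add_fderiv_add_of_lipschitz (fun z ↦ hasGradientAt_iff_hasFDerivAt.mp (hf z))
    (fun z w ↦ by simpa only [← map_sub, LinearIsometryEquiv.norm_map] using hlip z w) x y

theorem apply_sub_smul_gradient_le {f : F → ℝ} {f' : F → F} {L s : ℝ}
    (hf : ∀ z, HasGradientAt f (f' z) z) (hlip : ∀ z w, ‖f' z - f' w‖ ≤ L * ‖z - w‖)
    (hs : 0 ≤ s) (hsL : s * L ≤ 1) (y : F) :
    f (y - s • f' y) ≤ f y - s / 2 * ‖f' y‖ ^ 2 := by
  have hdesc := apply_le_add_inner_add_of_lipschitz_gradient hf hlip y (y - s • f' y)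
  rw [sub_sub_cancel_left, inner_neg_right, norm_neg, real_inner_smul_right,
    real_inner_self_eq_norm_sq, norm_smul, Real.norm_of_nonneg hs, mul_pow] at hdesc
  nlinarith [mul_nonneg (mul_nonneg hs (sub_nonneg.mpr hsL)) (sq_nonneg ‖f' y‖)]

end InnerProductSpace

theorem gradient_step_minimizer_inequality_general {d : ℕ} (μ L s : ℝ)
    (hμ : 0 < μ) (hs : 0 < s) (hsL : s < 1 / L)
    (f : EuclideanSpace ℝ (Fin d) → ℝ)
    (f' : EuclideanSpace ℝ (Fin d) → EuclideanSpace ℝ (Fin d))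
    (hdiff : ∀ z, HasGradientAt f (f' z) z)
    (hlip : ∀ z w, ‖f' z - f' w‖ ≤ L * ‖z - w‖)
    (hsc : ConvexOn ℝ Set.univ (fun z => f z - μ / 2 * ‖z‖ ^ 2))
    (xstar : EuclideanSpace ℝ (Fin d)) (hmin : ∀ z, f xstar ≤ f z)
    :
    ∀ y : EuclideanSpace ℝ (Fin d),
      f (y - s • f' y) - f xstar ≤
        ⟪f' y, y - xstar⟫ - s / 2 * ‖f' y‖ ^ 2 - μ / 2 * ‖(y - s • f' y) - xstar‖ ^ 2 := by
  intro y
  have hL : 0 < L := one_div_pos.mp (hs.trans hsL)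
  have hsL_le : s * L ≤ 1 := ((lt_div_iff₀ hL).mp hsL).le
  set g := f' y
  set x := y - s • g
  have hdecrease : f x ≤ f y - s / 2 * ‖g‖ ^ 2 :=
    apply_sub_smul_gradient_le hdiff hlip hs.le hsL_le y
  have hstrong := (strongConvexOn_iff_convex.mpr hsc).apply_add_inner_add_le
    (mem_univ y) (mem_univ xstar) (hdiff y)
  rw [← neg_sub y xstar, inner_neg_right, norm_neg] at hstrong
  have hprogress : s / 2 * ‖g‖ ^ 2 ≤ ⟪g, y - xstar⟫ := by
    linarith [hmin x, mul_nonneg hμ.le (sq_nonneg ‖y - xstar‖)]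
  have hcloser : ‖x - xstar‖ ^ 2 ≤ ‖y - xstar‖ ^ 2 := by
    have hexpand :
        ‖x - xstar‖ ^ 2 = ‖y - xstar‖ ^ 2 - 2 * s * ⟪g, y - xstar⟫ + s ^ 2 * ‖g‖ ^ 2 := by
      rw [show x - xstar = (y - xstar) - s • g by simp only [x]; abel, norm_sub_sq_real,
        real_inner_smul_right, real_inner_comm, norm_smul, Real.norm_of_nonneg hs.le, mul_pow]
      ring
    linarith [mul_le_mul_of_nonneg_left hprogress hs.le]
  linarith [mul_le_mul_of_nonneg_left hcloser hμ.le]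

theorem gradient_step_minimizer_inequality {d : ℕ} (μ L s : ℝ)
    (hμ : 0 < μ) (hμL : μ ≤ L) (hs : 0 < s) (hsL : s < 1 / L)
    (f : EuclideanSpace ℝ (Fin d) → ℝ)
    (f' : EuclideanSpace ℝ (Fin d) → EuclideanSpace ℝ (Fin d))
    (hdiff : ∀ z, HasGradientAt f (f' z) z)
    (hlip : ∀ z w, ‖f' z - f' w‖ ≤ L * ‖z - w‖)
    (hsc : ConvexOn ℝ Set.univ (fun z => f z - μ / 2 * ‖z‖ ^ 2))
    (xstar : EuclideanSpace ℝ (Fin d)) (hmin : ∀ z, f xstar ≤ f z)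
    (huniq : ∀ z, (∀ w, f z ≤ f w) → z = xstar)
    :
    ∀ y : EuclideanSpace ℝ (Fin d),
      f (y - s • f' y) - f xstar ≤
        ⟪f' y, y - xstar⟫ - s / 2 * ‖f' y‖ ^ 2 - μ / 2 * ‖(y - s • f' y) - xstar‖ ^ 2 :=
  gradient_step_minimizer_inequality_general μ L s hμ hs hsL f f' hdiff hlip hsc xstar hmin
end

section
/- Let f : ℝ^d → ℝ be differentiable, let s > 0, r > 0, k ≥ 1 an integer, and let x_k, x_{k+1}, y_k, v_k, v_{k+1}, x⋆ ∈ ℝ^d satisfy x_{k+1} = x_k + √s·v_{k+1}, (k+r)v_{k+1} − (k−1)v_k = −(k+r)√s·∇f(y_k), and x_{k+1} = y_k − s∇f(y_k). Then the mixed-energy difference satisfies the identity (1/2)‖√s·k·v_{k+1} + r(x_{k+1} − x⋆)‖² − (1/2)‖√s(k−1)v_k + r(x_k − x⋆)‖² = −s^{3/2}k(k+r)⟨∇f(y_k), v_{k+1}⟩ − sr(k+r)⟨∇f(y_k), y_k − x⋆⟩ − (s²/2)(k−r)(k+r)‖∇f(y_k)‖². -/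
open scoped RealInnerProductSpace

theorem mixed_energy_difference_identity {d : ℕ} (s r : ℝ) (hs : 0 < s) (hr : 0 < r)
    (k : ℕ) (hk : 1 ≤ k)
    (f : EuclideanSpace ℝ (Fin d) → ℝ)
    (f' : EuclideanSpace ℝ (Fin d) → EuclideanSpace ℝ (Fin d))
    (hdiff : ∀ z, HasGradientAt f (f' z) z)
    (xk xk1 yk vk vk1 xstar : EuclideanSpace ℝ (Fin d))
    (h1 : xk1 = xk + Real.sqrt s • vk1)
    (h2 : ((k : ℝ) + r) • vk1 - ((k : ℝ) - 1) • vk = -((((k : ℝ) + r) * Real.sqrt s)) • f' yk)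
    (h3 : xk1 = yk - s • f' yk) :
    1 / 2 * ‖(Real.sqrt s * (k : ℝ)) • vk1 + r • (xk1 - xstar)‖ ^ 2
        - 1 / 2 * ‖(Real.sqrt s * ((k : ℝ) - 1)) • vk + r • (xk - xstar)‖ ^ 2 =
      -(s ^ ((3 : ℝ) / 2) * (k : ℝ) * ((k : ℝ) + r)) * ⟪f' yk, vk1⟫
        - s * r * ((k : ℝ) + r) * ⟪f' yk, yk - xstar⟫
        - s ^ 2 / 2 * ((k : ℝ) - r) * ((k : ℝ) + r) * ‖f' yk‖ ^ 2 := by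
  set g := f' yk with hg
  set t := Real.sqrt s with htdef
  have hts : t * t = s := Real.mul_self_sqrt hs.le
  have h32 : s ^ ((3 : ℝ) / 2) = s * t := by
    rw [show (3:ℝ)/2 = 1 + 1/2 by norm_num, Real.rpow_add hs, Real.rpow_one,
      htdef, Real.sqrt_eq_rpow]
  set u : EuclideanSpace ℝ (Fin d) := (t * (k : ℝ)) • vk1 + r • (yk - xstar) with hu
  have hxk : xk = yk - s • g - t • vk1 := eq_sub_of_add_eq (h1.symm.trans h3)
  have hvk : ((k : ℝ) - 1) • vk = ((k : ℝ) + r) • vk1 + (((k : ℝ) + r) * t) • g := by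
    rw [sub_eq_iff_eq_add] at h2
    rw [h2]
    module
  have ha : (t * (k : ℝ)) • vk1 + r • (xk1 - xstar) = u + (-(s * r)) • g := by
    rw [hu, h3]; module
  have hb : (t * ((k : ℝ) - 1)) • vk + r • (xk - xstar) = u + (s * (k : ℝ)) • g := by
    rw [hu, hxk, show (t * ((k:ℝ) - 1)) • vk = t • (((k:ℝ) - 1) • vk) from (smul_smul t _ vk).symm,
      hvk, ← hts]
    module
  have key : ∀ c : ℝ, ‖u + c • g‖ ^ 2 = ‖u‖ ^ 2 + 2 * c * ⟪u, g⟫ + c ^ 2 * ‖g‖ ^ 2 := by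
    intro c
    rw [norm_add_sq_real, real_inner_smul_right, norm_smul, mul_pow, Real.norm_eq_abs, sq_abs]
    ring
  have hug : ⟪u, g⟫ = t * (k : ℝ) * ⟪g, vk1⟫ + r * ⟪g, yk - xstar⟫ := by
    rw [hu, inner_add_left, real_inner_smul_left, real_inner_smul_left,
      real_inner_comm vk1 g, real_inner_comm (yk - xstar) g]
  rw [ha, hb, key, key, hug, h32]
  ring
end
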